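/- Let q, a, x, u, v, y, z ∈ ℂ with 0 < |q| < 1, |u| ≤ 1, |v| ≤ 1, |a y| < 1, |a z| < 1, x ≠ 0, and 1 - a q^j x ≠ 0 for all j ≥ 0, and let n ∈ ℕ. Define g : ℂ → ℂ by g(t) = ∑_{m=0}^{∞} u^{C(m,2)} (q^n;q)_m (a y)^m / ((q;q)_m (a t;q)_{n+m}). Then T(z D_q|v) g, evaluated at x, equals (1/(a x;q)_n) · ∑_{m=0}^{∞} u^{C(m,2)} ((q^n;q)_m (a y)^m / ((q;q)_m (a q^n x;q)_m)) · ∑_{l=0}^{∞} v^{C(l,2)} (q^{n+m};q)_l (a z)^l / ((q;q)_l (a q^{n+m} x;q)_l). -/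

import Mathlib

/-!
The operator `D_q` acts on a single reciprocal q-shifted factorial by
`D_q (a t; q)_N⁻¹ = a (1 - q^N) / (a t; q)_{N+1}`, so `D_q^l` multiplies the `m`-th term of `g`
by `a^l (q^{n+m}; q)_l` and raises the length of its factorial to `n + m + l`. Splitting
`(a x; q)_{n+m+l} = (a x; q)_n (a q^n x; q)_m (a q^{n+m} x; q)_l` and interchanging the two sums
gives the identity. The interchange is legitimate because for `|q| < 1` the factorials
`(q^k; q)_M` are bounded uniformly in `k` and `M`, while `(b; q)_M` converges to a nonzero infinite
product when no factor vanishes, so its reciprocals stay bounded: the double series is then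
dominated by `|a z|^l |a y|^m`.
-/

/-- The finite q-shifted factorial (a;q)_n = ∏_{j=0}^{n-1} (1 - a q^j). -/
noncomputable def qPoch (q a : ℂ) (n : ℕ) : ℂ :=
  ∏ j ∈ Finset.range n, (1 - a * q ^ j)

/-- The q-differential operator: (D_q f)(x) = (f(x) - f(qx))/x. -/
noncomputable def Dq (q : ℂ) (f : ℂ → ℂ) : ℂ → ℂ :=
  fun x => (f x - f (q * x)) / x

/-- The deformed q-exponential operator:
T(y D_q|u) f(x) = ∑_{m≥0} u^{C(m,2)} (y^m/(q;q)_m) (D_q^m f)(x). -/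
noncomputable def Tq (q u y : ℂ) (f : ℂ → ℂ) (x : ℂ) : ℂ :=
  ∑' m : ℕ, u ^ (m.choose 2) * (y ^ m / qPoch q q m) * ((Dq q)^[m] f x)

open Finset Filter Topology

lemma qPoch_zero (q a : ℂ) : qPoch q a 0 = 1 :=
  prod_range_zero _

lemma qPoch_succ (q a : ℂ) (M : ℕ) : qPoch q a (M + 1) = qPoch q a M * (1 - a * q ^ M) :=
  prod_range_succ _ _

lemma qPoch_succ' (q a : ℂ) (M : ℕ) : qPoch q a (M + 1) = (1 - a) * qPoch q (a * q) M := by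
  rw [qPoch, qPoch, prod_range_succ', pow_zero, mul_one, mul_comm]
  simp only [pow_succ', mul_assoc]

lemma qPoch_add (q a : ℂ) (M L : ℕ) :
    qPoch q a (M + L) = qPoch q a M * qPoch q (a * q ^ M) L := by
  simp only [qPoch, prod_range_add, pow_add, mul_assoc]

lemma qPoch_add_add (q b : ℂ) (n m l : ℕ) :
    qPoch q b (n + m + l) = qPoch q b n * qPoch q (b * q ^ n) m * qPoch q (b * q ^ (n + m)) l := by
  rw [qPoch_add, qPoch_add, pow_add]

section QPochhammer

variable {q : ℂ}

lemma qPoch_ne_zero {a : ℂ} (h : ∀ j : ℕ, 1 - a * q ^ j ≠ 0) (M : ℕ) :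
    qPoch q a M ≠ 0 :=
  prod_ne_zero_iff.2 fun j _ => h j

lemma one_sub_mul_pow_mul_pow_ne_zero {a : ℂ} (h : ∀ j : ℕ, 1 - a * q ^ j ≠ 0) (k j : ℕ) :
    1 - a * q ^ k * q ^ j ≠ 0 := by
  simpa only [mul_assoc, ← pow_add] using h (k + j)

lemma inv_qPoch_sub_inv_qPoch_mul {a : ℂ} {M : ℕ} (h : qPoch q a (M + 1) ≠ 0) :
    (qPoch q a M)⁻¹ - (qPoch q (a * q) M)⁻¹ = a * (1 - q ^ M) / qPoch q a (M + 1) := by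
  have hP : qPoch q a M ≠ 0 := left_ne_zero_of_mul (qPoch_succ q a M ▸ h)
  have hP' : qPoch q (a * q) M ≠ 0 := right_ne_zero_of_mul (qPoch_succ' q a M ▸ h)
  rw [eq_div_iff h, sub_mul]
  nth_rewrite 1 [qPoch_succ]
  rw [qPoch_succ', inv_mul_cancel_left₀ hP, mul_left_comm, inv_mul_cancel₀ hP', mul_one]
  ring

lemma one_sub_self_mul_pow_ne_zero (hq : ‖q‖ < 1) (j : ℕ) : 1 - q * q ^ j ≠ 0 := by
  rw [← pow_succ', sub_ne_zero]
  refine fun h => (pow_lt_one₀ (norm_nonneg q) hq j.succ_ne_zero).ne ?_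
  rw [← norm_pow, ← h, norm_one]

lemma summable_norm_mul_pow (hq : ‖q‖ < 1) (a : ℂ) :
    Summable fun j : ℕ => ‖-(a * q ^ j)‖ := by
  simpa only [norm_neg, norm_mul, norm_pow] using
    (summable_geometric_of_lt_one (norm_nonneg q) hq).mul_left ‖a‖

lemma norm_qPoch_le (hq : ‖q‖ < 1) (a : ℂ) (M : ℕ) :
    ‖qPoch q a M‖ ≤ Real.exp (‖a‖ * (1 - ‖q‖)⁻¹) := by
  have hsum : ∑ j ∈ range M, ‖-(a * q ^ j)‖ ≤ ‖a‖ * (1 - ‖q‖)⁻¹ := by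
    rw [← tsum_geometric_of_lt_one (norm_nonneg q) hq, ← tsum_mul_left]
    simpa only [norm_neg, norm_mul, norm_pow] using
      (summable_norm_mul_pow hq a).sum_le_tsum _ fun _ _ => norm_nonneg _
  have hprod := norm_prod_one_add_sub_one_le (range M) fun j => -(a * q ^ j)
  simp only [← sub_eq_add_neg] at hprod
  change ‖qPoch q a M - 1‖ ≤ _ at hprod
  calc ‖qPoch q a M‖ ≤ ‖qPoch q a M - 1‖ + ‖(1 : ℂ)‖ := norm_le_norm_sub_add _ _
    _ ≤ Real.exp (∑ j ∈ range M, ‖-(a * q ^ j)‖) := by rw [norm_one]; linarith [hprod]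
    _ ≤ Real.exp (‖a‖ * (1 - ‖q‖)⁻¹) := Real.exp_le_exp.2 hsum

lemma norm_qPoch_pow_le (hq : ‖q‖ < 1) (k M : ℕ) :
    ‖qPoch q (q ^ k) M‖ ≤ Real.exp (1 - ‖q‖)⁻¹ := by
  refine (norm_qPoch_le hq _ M).trans (Real.exp_le_exp.2 ?_)
  have : 0 ≤ (1 - ‖q‖)⁻¹ := inv_nonneg.2 (by linarith)
  rw [norm_pow]
  exact mul_le_of_le_one_left this (pow_le_one₀ (norm_nonneg q) hq.le)

lemma tendsto_qPoch (hq : ‖q‖ < 1) (a : ℂ) :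
    Tendsto (qPoch q a) atTop (𝓝 (∏' j : ℕ, (1 - a * q ^ j))) := by
  change Tendsto (fun M => ∏ j ∈ range M, (1 - a * q ^ j)) _ _
  simpa only [← sub_eq_add_neg] using
    (multipliable_one_add_of_summable (summable_norm_mul_pow hq a)).tendsto_prod_tprod_nat

lemma exists_norm_inv_qPoch_le (hq : ‖q‖ < 1) {a : ℂ} (h : ∀ j : ℕ, 1 - a * q ^ j ≠ 0) :
    ∃ B, ∀ M, ‖(qPoch q a M)⁻¹‖ ≤ B := by
  have hlim : ∏' j : ℕ, (1 - a * q ^ j) ≠ 0 := by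
    simpa only [← sub_eq_add_neg] using
      tprod_one_add_ne_zero_of_summable (by simpa only [← sub_eq_add_neg] using h)
        (summable_norm_mul_pow hq a)
  obtain ⟨B, hB⟩ :=
    (Metric.isBounded_range_of_tendsto _ ((tendsto_qPoch hq a).inv₀ hlim)).exists_norm_le
  exact ⟨B, fun M => hB _ ⟨M, rfl⟩⟩

lemma exists_norm_pow_choose_mul_pow_div_qPoch_le (hq : ‖q‖ < 1) {w : ℂ} (hw : ‖w‖ ≤ 1)
    (s : ℂ) :
    ∃ B, ∀ m : ℕ, ‖w ^ m.choose 2 * s ^ m / qPoch q q m‖ ≤ B * ‖s‖ ^ m := by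
  obtain ⟨B, hB⟩ := exists_norm_inv_qPoch_le hq (one_sub_self_mul_pow_ne_zero hq)
  refine ⟨B, fun m => ?_⟩
  rw [div_eq_mul_inv, norm_mul, norm_mul, norm_pow, norm_pow]
  calc ‖w‖ ^ m.choose 2 * ‖s‖ ^ m * ‖(qPoch q q m)⁻¹‖ ≤ 1 * ‖s‖ ^ m * B := by
        gcongr
        · exact pow_le_one₀ (norm_nonneg w) hw
        · exact hB m
    _ = B * ‖s‖ ^ m := by ring

lemma exists_norm_qPoch_pow_div_qPoch_le (hq : ‖q‖ < 1) {b : ℂ}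
    (hb : ∀ j : ℕ, 1 - b * q ^ j ≠ 0) :
    ∃ B, ∀ k M L : ℕ, ‖qPoch q (q ^ k) M / qPoch q b L‖ ≤ B := by
  obtain ⟨B, hB⟩ := exists_norm_inv_qPoch_le hq hb
  refine ⟨Real.exp (1 - ‖q‖)⁻¹ * B, fun k M L => ?_⟩
  rw [div_eq_mul_inv, norm_mul]
  exact mul_le_mul (norm_qPoch_pow_le hq k M) (hB L) (norm_nonneg _) (Real.exp_pos _).le

variable {b : ℂ} {c d : ℕ → ℂ} {N : ℕ → ℕ} {K K' r s : ℝ}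

lemma summable_mul_qPoch_pow_div_qPoch (hq : ‖q‖ < 1) (hb : ∀ j : ℕ, 1 - b * q ^ j ≠ 0)
    (hc : ∀ m, ‖c m‖ ≤ K * r ^ m) (hr₀ : 0 ≤ r) (hr : r < 1) (l : ℕ) :
    Summable fun m => c m * (qPoch q (q ^ N m) l / qPoch q b (N m + l)) := by
  obtain ⟨B, hB⟩ := exists_norm_qPoch_pow_div_qPoch_le hq hb
  refine ((summable_geometric_of_lt_one hr₀ hr).mul_left (K * B)).of_norm_bounded fun m => ?_
  rw [norm_mul, mul_right_comm]
  exact mul_le_mul (hc m) (hB _ _ _) (norm_nonneg _) ((norm_nonneg _).trans (hc m))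

lemma summable_uncurry_mul_qPoch_pow_div_qPoch (hq : ‖q‖ < 1)
    (hb : ∀ j : ℕ, 1 - b * q ^ j ≠ 0)
    (hd : ∀ l, ‖d l‖ ≤ K' * s ^ l) (hs₀ : 0 ≤ s) (hs : s < 1)
    (hc : ∀ m, ‖c m‖ ≤ K * r ^ m) (hr₀ : 0 ≤ r) (hr : r < 1) :
    Summable (Function.uncurry fun l m =>
      d l * (c m * (qPoch q (q ^ N m) l / qPoch q b (N m + l)))) := by
  obtain ⟨B, hB⟩ := exists_norm_qPoch_pow_div_qPoch_le hq hb
  have hgeom := (summable_geometric_of_lt_one hs₀ hs).mul_of_nonneg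
    (summable_geometric_of_lt_one hr₀ hr) (fun _ => pow_nonneg hs₀ _)
    (fun _ => pow_nonneg hr₀ _)
  refine (hgeom.mul_left (K' * K * B)).of_norm_bounded fun ⟨l, m⟩ => ?_
  have : 0 ≤ K' * s ^ l := (norm_nonneg _).trans (hd l)
  have : 0 ≤ K * r ^ m := (norm_nonneg _).trans (hc m)
  calc ‖d l * (c m * (qPoch q (q ^ N m) l / qPoch q b (N m + l)))‖
      ≤ K' * s ^ l * (K * r ^ m * B) := by
        rw [norm_mul, norm_mul]
        gcongr
        exacts [hd l, hc m, hB _ _ _]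
    _ = K' * K * B * (s ^ l * r ^ m) := by ring

lemma iterate_Dq_tsum_div_qPoch {a x : ℂ} (hq : q ≠ 0) (hx : x ≠ 0)
    (hax : ∀ j : ℕ, 1 - a * x * q ^ j ≠ 0) (c : ℕ → ℂ) (N : ℕ → ℕ)
    (hS : ∀ l k : ℕ, Summable fun m =>
      c m * (qPoch q (q ^ N m) l / qPoch q (a * x * q ^ k) (N m + l)))
    (l k : ℕ) :
    (Dq q)^[l] (fun t => ∑' m, c m / qPoch q (a * t) (N m)) (x * q ^ k) =
      a ^ l * ∑' m, c m * (qPoch q (q ^ N m) l / qPoch q (a * x * q ^ k) (N m + l)) := by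
  induction l generalizing k with
  | zero =>
    simp only [Function.iterate_zero, id, pow_zero, one_mul, qPoch_zero, add_zero, mul_one_div,
      mul_assoc]
  | succ l ih =>
    have ht : x * q ^ k ≠ 0 := mul_ne_zero hx (pow_ne_zero k hq)
    rw [Function.iterate_succ_apply', Dq, show q * (x * q ^ k) = x * q ^ (k + 1) by ring, ih k,
      ih (k + 1), ← mul_sub, ← (hS l k).tsum_sub (hS l (k + 1)), mul_div_assoc,
      ← tsum_div_const, pow_succ a l, mul_assoc (a ^ l), ← tsum_mul_left (a := a)]
    congr 1
    refine tsum_congr fun m => ?_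
    have hdiff := inv_qPoch_sub_inv_qPoch_mul
      (qPoch_ne_zero (one_sub_mul_pow_mul_pow_ne_zero hax k) (N m + l + 1))
    rw [pow_succ q k, ← mul_assoc]
    simp only [div_eq_mul_inv (qPoch q (q ^ N m) _), ← mul_sub, hdiff]
    rw [← add_assoc, qPoch_succ, qPoch_succ, pow_add]
    field_simp

end QPochhammer

theorem stmt12 (q a x u v y z : ℂ) (n : ℕ)
    (hq0 : 0 < ‖q‖) (hq1 : ‖q‖ < 1)
    (hu : ‖u‖ ≤ 1) (hv : ‖v‖ ≤ 1)
    (hay : ‖a * y‖ < 1) (haz : ‖a * z‖ < 1) (hx : x ≠ 0)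
    (h : ∀ j : ℕ, 1 - a * q ^ j * x ≠ 0) :
    Tq q v z
        (fun t => ∑' m : ℕ,
          u ^ (m.choose 2) * qPoch q (q ^ n) m * (a * y) ^ m /
            (qPoch q q m * qPoch q (a * t) (n + m))) x =
      1 / qPoch q (a * x) n *
        ∑' m : ℕ,
          u ^ (m.choose 2) *
            (qPoch q (q ^ n) m * (a * y) ^ m /
              (qPoch q q m * qPoch q (a * q ^ n * x) m)) *
            ∑' l : ℕ,
              v ^ (l.choose 2) * qPoch q (q ^ (n + m)) l * (a * z) ^ l /
                (qPoch q q l * qPoch q (a * q ^ (n + m) * x) l) := by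
  have hax (j : ℕ) : 1 - a * x * q ^ j ≠ 0 := by simpa only [mul_right_comm] using h j
  obtain ⟨Bu, hBu⟩ := exists_norm_pow_choose_mul_pow_div_qPoch_le hq1 hu (a * y)
  obtain ⟨Bv, hBv⟩ := exists_norm_pow_choose_mul_pow_div_qPoch_le hq1 hv (a * z)
  set c : ℕ → ℂ := fun m => u ^ m.choose 2 * (a * y) ^ m / qPoch q q m * qPoch q (q ^ n) m
  have hc : ∀ m, ‖c m‖ ≤ Bu * Real.exp (1 - ‖q‖)⁻¹ * ‖a * y‖ ^ m := fun m => by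
    rw [norm_mul, mul_right_comm]
    exact mul_le_mul (hBu m) (norm_qPoch_pow_le hq1 n m) (norm_nonneg _)
      ((norm_nonneg _).trans (hBu m))
  have hg : (fun t => ∑' m : ℕ, u ^ (m.choose 2) * qPoch q (q ^ n) m * (a * y) ^ m /
      (qPoch q q m * qPoch q (a * t) (n + m))) = fun t => ∑' m, c m / qPoch q (a * t) (n + m) :=
    funext fun t => tsum_congr fun m => by simp only [c]; ring
  have hS (l k : ℕ) := summable_mul_qPoch_pow_div_qPoch (N := (n + ·)) hq1
    (one_sub_mul_pow_mul_pow_ne_zero hax k) hc (norm_nonneg _) hay l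
  have hDg (l : ℕ) : (Dq q)^[l] (fun t => ∑' m, c m / qPoch q (a * t) (n + m)) x =
      a ^ l * ∑' m, c m * (qPoch q (q ^ (n + m)) l / qPoch q (a * x) (n + m + l)) := by
    simpa only [pow_zero, mul_one] using
      iterate_Dq_tsum_div_qPoch (norm_pos_iff.1 hq0) hx hax c (n + ·) hS l 0
  set F : ℕ → ℕ → ℂ := fun l m => v ^ l.choose 2 * (a * z) ^ l / qPoch q q l *
    (c m * (qPoch q (q ^ (n + m)) l / qPoch q (a * x) (n + m + l)))
  have hF : Summable (Function.uncurry F) := summable_uncurry_mul_qPoch_pow_div_qPoch hq1 hax hBv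
    (norm_nonneg _) haz hc (norm_nonneg _) hay
  calc _ = ∑' l, ∑' m, F l m := by
        rw [Tq, hg]
        refine tsum_congr fun l => ?_
        rw [hDg, ← tsum_mul_left, ← tsum_mul_left]
        exact tsum_congr fun m => by ring
    _ = ∑' m, ∑' l, F l m := hF.tsum_comm.symm
    _ = _ := by
      rw [← tsum_mul_left]
      refine tsum_congr fun m => ?_
      rw [← tsum_mul_left, ← tsum_mul_left]
      refine tsum_congr fun l => ?_
      simp only [F, c]
      rw [qPoch_add_add, show a * q ^ n * x = a * x * q ^ n by ring,
        show a * q ^ (n + m) * x = a * x * q ^ (n + m) by ring]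
      ring
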